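/- Let C be a preorder category with finite products, B a preorder category, and F : C → B a product-preserving monotone functor. If F is (essentially) surjective on objects and for all d, e ∈ C with F(d) ≤ F(e) there exists e' ≤ d in C with F(e') = F(d) and e' ≤ e, then the induced monotone map from the poset reflection of C localized at {φ : F(φ) iso} to the poset reflection of B is an order isomorphism. -/

import Mathlib

/-!
A zigzag in the localization is sent by `F` to a chain of inequalities in `B`, because `F` is
monotone and turns each inverted arrow into an equality. Conversely, when `F d ≤ F e` the lifting
property provides `e' ≤ d` with `F e' = F d` and `e' ≤ e`, i.e. the zigzag `d ⟵ e' ⟶ e` whose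
backward arrow is inverted by `F`.
-/

/-- The generating arrows of the localization of `C` at the arrows inverted by `F`. -/
def LocalizedStep {C B : Type*} [Preorder C] (F : C → B) (x y : C) : Prop :=
  x ≤ y ∨ (y ≤ x ∧ F x = F y)

section

variable {C B : Type*} [Preorder C] [Preorder B] {F : C → B} {d e : C}

theorem Monotone.le_of_reflTransGen_localizedStep (hF : Monotone F)
    (h : Relation.ReflTransGen (LocalizedStep F) d e) : F d ≤ F e := by
  have hstep : ∀ x y, LocalizedStep F x y → F x ≤ F y := by
    rintro x y (hle | ⟨-, heq⟩)
    exacts [hF hle, heq.le]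
  have := Relation.ReflTransGen.lift F hstep d e h
  rwa [Relation.reflTransGen_eq_self] at this

theorem reflTransGen_localizedStep_of_le
    (hlift : ∀ d e : C, F d ≤ F e → ∃ e' : C, e' ≤ d ∧ F e' = F d ∧ e' ≤ e)
    (h : F d ≤ F e) : Relation.ReflTransGen (LocalizedStep F) d e := by
  obtain ⟨e', he'd, hFe', he'e⟩ := hlift d e h
  exact .head (Or.inr ⟨he'd, hFe'.symm⟩) (.single (Or.inl he'e))

end

theorem stmt_17_general {C B : Type*} [SemilatticeInf C] [SemilatticeInf B]
    (F : C → B) (hmono : Monotone F)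
    (hsurj : Function.Surjective F)
    (hlift : ∀ d e : C, F d ≤ F e → ∃ e' : C, e' ≤ d ∧ F e' = F d ∧ e' ≤ e) :
    (∀ b : B, ∃ d : C, F d = b) ∧
      ∀ d e : C,
        Relation.ReflTransGen (fun x y : C => x ≤ y ∨ (y ≤ x ∧ F x = F y)) d e ↔
          F d ≤ F e :=
  ⟨hsurj, fun _ _ =>
    ⟨hmono.le_of_reflTransGen_localizedStep, reflTransGen_localizedStep_of_le hlift⟩⟩

/-- 0-truncated version of the homotopical presentation criterion for preorders:
`C` is a preorder with finite products (binary meets), `B` a preorder, and `F` a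
monotone, meet-preserving map that is surjective on objects and has the lifting
property.  Localizing `C` at the morphisms sent to isomorphisms by `F` means taking
the reflexive-transitive closure of `≤` together with the reversed inequalities
`d ⟶ e'` for `e' ≤ d` with `F e' = F d`; the conclusion that the induced map on
poset reflections is an order isomorphism amounts to: `F` is surjective on objects
and the localized relation between `d` and `e` holds iff `F d ≤ F e`. -/
theorem stmt_17 {C B : Type*} [SemilatticeInf C] [SemilatticeInf B]
    (F : C → B) (hmono : Monotone F) (hinf : ∀ x y : C, F (x ⊓ y) = F x ⊓ F y)
    (hsurj : Function.Surjective F)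
    (hlift : ∀ d e : C, F d ≤ F e → ∃ e' : C, e' ≤ d ∧ F e' = F d ∧ e' ≤ e) :
    (∀ b : B, ∃ d : C, F d = b) ∧
      ∀ d e : C,
        Relation.ReflTransGen (fun x y : C => x ≤ y ∨ (y ≤ x ∧ F x = F y)) d e ↔
          F d ≤ F e :=
  stmt_17_general F hmono hsurj hlift
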